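/- arXiv:1004.1205 — 5 statements merged into one kernel-verified Lean document; each statement's English description precedes it below -/
import Mathlib

section
/- Let n ≥ 5. For every λ ∈ Φ3^n with λ ∉ ⟨C,J⟩(2,1) ∪ ⟨J⟩ρ, one has D^(n)(λ) > D^(n)((2,1)) > 1. -/
open scoped Classical
noncomputable section

/-- The set `Φ₃ⁿ` of SU(3) weights at height `n`. -/
def Phi3 (n : ℕ) : Finset (ℤ × ℤ) :=
  (Finset.Icc ((1 : ℤ), (1 : ℤ)) ((n : ℤ), (n : ℤ))).filter (fun l => l.1 + l.2 ≤ (n : ℤ) - 1)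

/-- The order-3 simple current `Jλ = (n−λ₁−λ₂, λ₁)`. -/
def Jv (n : ℕ) (l : ℤ × ℤ) : ℤ × ℤ := ((n : ℤ) - l.1 - l.2, l.1)

/-- Conjugation `Cλ = (λ₂, λ₁)`. -/
def Cv (l : ℤ × ℤ) : ℤ × ℤ := (l.2, l.1)

/-- The orbit `⟨J⟩λ = {λ, Jλ, J²λ}`. -/
def orbJ (n : ℕ) (l : ℤ × ℤ) : Finset (ℤ × ℤ) := {l, Jv n l, Jv n (Jv n l)}

/-- The orbit `⟨C,J⟩λ = {λ, Jλ, J²λ, Cλ, JCλ, J²Cλ}`. -/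
def orbCJ (n : ℕ) (l : ℤ × ℤ) : Finset (ℤ × ℤ) := orbJ n l ∪ orbJ n (Cv l)

/-- The SU(3) quantum dimension `D⁽ⁿ⁾(λ)`. -/
def qdim (n : ℕ) (l : ℤ × ℤ) : ℝ :=
  (Real.sin (Real.pi * (l.1 : ℝ) / n) * Real.sin (Real.pi * (l.2 : ℝ) / n) *
      Real.sin (Real.pi * ((l.1 : ℝ) + (l.2 : ℝ)) / n)) /
    (Real.sin (Real.pi / n) ^ 2 * Real.sin (2 * Real.pi / n))

/-!
With `u = π/n` and `c = n - a - b`, the numerator of `D⁽ⁿ⁾(a, b)` is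
`sin (a u) sin (b u) sin (c u)`, symmetric in the triple `(a, b, c)` of positive integers summing
to `n`; the excluded orbits are exactly the triples with two entries summing to at most `3`, and
`(2, 1)` gives `sin u sin 2u sin 3u`.
By `2 sin p sin q = cos (q - p) - cos (p + q)`, at a fixed value of `p + q` the product
`sin p sin q` increases as `p` and `q` get closer. For a sorted triple `x ≤ y ≤ z` this gives
`sin 2u sin (n - 3)u < sin (y u) sin (z u)` when `x = 1`, and when `x ≥ 2` it gives
`sin u sin 3u < sin² 2u`, while each of `sin (x u)`, `sin (y u)`, `sin (z u)` is at least `sin 2u`.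
-/

open Real

lemma sin_le_sin_of_le_of_add_le_pi {x y : ℝ} (hx : 0 ≤ x) (hxy : x ≤ y) (hxy_pi : x + y ≤ π) :
    sin x ≤ sin y := by
  rw [← sub_nonneg, sin_sub_sin]
  refine mul_nonneg (mul_nonneg two_pos.le (sin_nonneg_of_nonneg_of_le_pi ?_ ?_))
    (cos_nonneg_of_mem_Icc ⟨?_, ?_⟩) <;> linarith

lemma sin_lt_sin_of_lt_of_add_lt_pi {x y : ℝ} (hx : 0 ≤ x) (hxy : x < y) (hxy_pi : x + y < π) :
    sin x < sin y := by
  rw [← sub_pos, sin_sub_sin]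
  refine mul_pos (mul_pos two_pos (sin_pos_of_pos_of_lt_pi ?_ ?_))
    (cos_pos_of_mem_Ioo ⟨?_, ?_⟩) <;> linarith

lemma sin_mul_sin_lt_sin_mul_sin {p q p' q' : ℝ} (hsum : p + q = p' + q') (hpq : p ≤ q)
    (hlt : q - p < q' - p') (hle : q' - p' ≤ π) : sin p' * sin q' < sin p * sin q := by
  have hcos : cos (q' - p') < cos (q - p) :=
    strictAntiOn_cos ⟨by linarith, by linarith⟩ ⟨by linarith, hle⟩ hlt
  have h := two_mul_sin_mul_sin p q
  have h' := two_mul_sin_mul_sin p' q'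
  rw [← cos_neg, neg_sub, hsum] at h
  rw [← cos_neg, neg_sub] at h'
  linarith

def sinFrac (n : ℕ) (k : ℤ) : ℝ := sin (π * k / n)

section sinFrac

variable {n : ℕ} {i j k i' j' : ℤ}

lemma sinFrac_pos (hk : 0 < k) (hkn : k < n) : 0 < sinFrac n k := by
  have hk' : (0 : ℝ) < k := by exact_mod_cast hk
  have hkn' : (k : ℝ) < n := by exact_mod_cast hkn
  have hn : (0 : ℝ) < n := hk'.trans hkn'
  refine sin_pos_of_pos_of_lt_pi (by positivity) ?_
  rw [div_lt_iff₀ hn]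
  exact mul_lt_mul_of_pos_left hkn' pi_pos

lemma sinFrac_sub (hn : n ≠ 0) (k : ℤ) : sinFrac n (n - k) = sinFrac n k := by
  rw [sinFrac, sinFrac, ← sin_pi_sub]
  congr 1
  field_simp
  push_cast
  ring

lemma sinFrac_le_sinFrac (hi : 0 ≤ i) (hik : i ≤ k) (hkn : k ≤ n - i) :
    sinFrac n i ≤ sinFrac n k := by
  rcases Nat.eq_zero_or_pos n with rfl | hn
  · simp [sinFrac]
  have hn' : (0 : ℝ) < n := by exact_mod_cast hn
  have hik' : (i : ℝ) ≤ k := by exact_mod_cast hik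
  have hkn' : (i : ℝ) + k ≤ n := by exact_mod_cast (by omega : i + k ≤ n)
  have hi' : (0 : ℝ) ≤ i := by exact_mod_cast hi
  refine sin_le_sin_of_le_of_add_le_pi (by positivity) (by gcongr) ?_
  rw [← add_div, ← mul_add, div_le_iff₀ hn']
  exact mul_le_mul_of_nonneg_left hkn' pi_pos.le

lemma sinFrac_lt_sinFrac (hi : 0 ≤ i) (hik : i < k) (hkn : k < n - i) :
    sinFrac n i < sinFrac n k := by
  have hn' : (0 : ℝ) < n := by exact_mod_cast (by omega : (0 : ℤ) < n)
  have hik' : (i : ℝ) < k := by exact_mod_cast hik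
  have hkn' : (i : ℝ) + k < n := by exact_mod_cast (by omega : i + k < n)
  have hi' : (0 : ℝ) ≤ i := by exact_mod_cast hi
  refine sin_lt_sin_of_lt_of_add_lt_pi (by positivity) (by gcongr) ?_
  rw [← add_div, ← mul_add, div_lt_iff₀ hn']
  exact mul_lt_mul_of_pos_left hkn' pi_pos

lemma sinFrac_mul_sinFrac_lt (hsum : i + j = i' + j') (hij : i ≤ j) (hlt : j - i < j' - i')
    (hn : j' - i' ≤ n) : sinFrac n i' * sinFrac n j' < sinFrac n i * sinFrac n j := by
  have hn' : (0 : ℝ) < n := by exact_mod_cast (by omega : (0 : ℤ) < n)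
  have hsum' : (i : ℝ) + j = i' + j' := by exact_mod_cast hsum
  have hij' : (i : ℝ) ≤ j := by exact_mod_cast hij
  have hlt' : (j : ℝ) - i < j' - i' := by exact_mod_cast hlt
  have hn'' : (j' : ℝ) - i' ≤ n := by exact_mod_cast hn
  refine sin_mul_sin_lt_sin_mul_sin ?_ (by gcongr) ?_ ?_ <;>
    simp only [← add_div, ← sub_div, ← mul_add, ← mul_sub]
  · rw [hsum']
  · gcongr
  · rw [div_le_iff₀ hn']
    exact mul_le_mul_of_nonneg_left hn'' pi_pos.le

lemma sinFrac_mul_mul_lt_of_le_of_le {x y z : ℤ} (hx : 1 ≤ x) (hxy : x ≤ y) (hyz : y ≤ z)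
    (hsum : x + y + z = n) (hxy4 : 4 ≤ x + y) :
    sinFrac n 1 * sinFrac n 2 * sinFrac n 3 < sinFrac n x * sinFrac n y * sinFrac n z := by
  have hn : n ≠ 0 := by omega
  have h1 : 0 < sinFrac n 1 := sinFrac_pos one_pos (by omega)
  have h2 : 0 < sinFrac n 2 := sinFrac_pos two_pos (by omega)
  have hx' : 0 < sinFrac n x := sinFrac_pos (by omega) (by omega)
  have hy : 0 < sinFrac n y := sinFrac_pos (by omega) (by omega)
  rcases eq_or_lt_of_le hx with rfl | hx2
  · have hyz : sinFrac n 2 * sinFrac n 3 < sinFrac n y * sinFrac n z := by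
      rw [← sinFrac_sub hn 3]
      exact sinFrac_mul_sinFrac_lt (by omega) hyz (by omega) (by omega)
    rw [mul_assoc, mul_assoc]
    exact mul_lt_mul_of_pos_left hyz h1
  · have h13 : sinFrac n 1 * sinFrac n 3 < sinFrac n 2 * sinFrac n 2 :=
      sinFrac_mul_sinFrac_lt (by norm_num) le_rfl (by norm_num) (by omega)
    have h2x : sinFrac n 2 ≤ sinFrac n x := sinFrac_le_sinFrac two_pos.le (by omega) (by omega)
    have h2y : sinFrac n 2 ≤ sinFrac n y := sinFrac_le_sinFrac two_pos.le (by omega) (by omega)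
    have h2z : sinFrac n 2 ≤ sinFrac n z := sinFrac_le_sinFrac two_pos.le (by omega) (by omega)
    calc sinFrac n 1 * sinFrac n 2 * sinFrac n 3
        = sinFrac n 1 * sinFrac n 3 * sinFrac n 2 := by ring
      _ < sinFrac n 2 * sinFrac n 2 * sinFrac n 2 := mul_lt_mul_of_pos_right h13 h2
      _ ≤ sinFrac n x * sinFrac n y * sinFrac n z :=
        mul_le_mul (mul_le_mul h2x h2y h2.le hx'.le) h2z h2.le (mul_pos hx' hy).le

lemma sinFrac_mul_mul_lt {a b c : ℤ} (ha : 1 ≤ a) (hb : 1 ≤ b) (hc : 1 ≤ c)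
    (hsum : a + b + c = n) (hab : 4 ≤ a + b) (hbc : 4 ≤ b + c) (hac : 4 ≤ a + c) :
    sinFrac n 1 * sinFrac n 2 * sinFrac n 3 < sinFrac n a * sinFrac n b * sinFrac n c := by
  have key := fun x y z ↦ @sinFrac_mul_mul_lt_of_le_of_le n x y z
  rcases le_total a b with hab | hab <;> rcases le_total b c with hbc | hbc <;>
    rcases le_total a c with hac | hac <;>
    first
    | linarith [key a b c (by omega) (by omega) (by omega) (by omega) (by omega)]
    | linarith [key a c b (by omega) (by omega) (by omega) (by omega) (by omega)]
    | linarith [key b a c (by omega) (by omega) (by omega) (by omega) (by omega)]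
    | linarith [key b c a (by omega) (by omega) (by omega) (by omega) (by omega)]
    | linarith [key c a b (by omega) (by omega) (by omega) (by omega) (by omega)]
    | linarith [key c b a (by omega) (by omega) (by omega) (by omega) (by omega)]

end sinFrac

lemma qdim_eq {n : ℕ} (hn : n ≠ 0) (a b : ℤ) :
    qdim n (a, b) = sinFrac n a * sinFrac n b * sinFrac n (n - a - b) /
      (sinFrac n 1 ^ 2 * sinFrac n 2) := by
  rw [show (n : ℤ) - a - b = n - (a + b) by ring, sinFrac_sub hn]
  simp [qdim, sinFrac, mul_comm]

lemma mem_Phi3 {n : ℕ} {a b : ℤ} : (a, b) ∈ Phi3 n ↔ 1 ≤ a ∧ 1 ≤ b ∧ a + b ≤ n - 1 := by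
  simp only [Phi3, Finset.mem_filter, Finset.mem_Icc, Prod.mk_le_mk]
  omega

lemma four_le_of_notMem_orbits {n : ℕ} {a b : ℤ} (hmem : (a, b) ∈ Phi3 n)
    (h : (a, b) ∉ orbCJ n (2, 1) ∪ orbJ n (1, 1)) :
    4 ≤ a + b ∧ 4 ≤ n - a ∧ 4 ≤ n - b := by
  rw [mem_Phi3] at hmem
  simp only [orbCJ, orbJ, Jv, Cv, Finset.mem_union, Finset.mem_insert, Finset.mem_singleton,
    Prod.ext_iff, not_or] at h
  omega

theorem statement8 (n : ℕ) (hn : 5 ≤ n) :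
    ∀ lam ∈ Phi3 n, lam ∉ orbCJ n (2, 1) ∪ orbJ n (1, 1) →
      qdim n lam > qdim n (2, 1) ∧ qdim n (2, 1) > 1 := by
  rintro ⟨a, b⟩ hmem hnot
  obtain ⟨ha, hb, hab⟩ := mem_Phi3.mp hmem
  obtain ⟨hab4, hbc4, hac4⟩ := four_le_of_notMem_orbits hmem hnot
  have hn0 : n ≠ 0 := by omega
  have h1 : 0 < sinFrac n 1 := sinFrac_pos one_pos (by omega)
  have h2 : 0 < sinFrac n 2 := sinFrac_pos two_pos (by omega)
  have hden : 0 < sinFrac n 1 ^ 2 * sinFrac n 2 := by positivity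
  have h21 : qdim n (2, 1) = sinFrac n 1 * sinFrac n 2 * sinFrac n 3 /
      (sinFrac n 1 ^ 2 * sinFrac n 2) := by
    rw [qdim_eq hn0, show (n : ℤ) - 2 - 1 = n - 3 by ring, sinFrac_sub hn0]
    ring
  rw [h21, qdim_eq hn0]
  constructor
  · exact div_lt_div_of_pos_right
      (sinFrac_mul_mul_lt ha hb (by omega) (by omega) hab4 (by omega) (by omega)) hden
  · rw [gt_iff_lt, one_lt_div hden]
    calc sinFrac n 1 ^ 2 * sinFrac n 2 = sinFrac n 1 * sinFrac n 2 * sinFrac n 1 := by ring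
      _ < sinFrac n 1 * sinFrac n 2 * sinFrac n 3 :=
        mul_lt_mul_of_pos_left (sinFrac_lt_sinFrac zero_le_one (by norm_num) (by omega))
          (mul_pos h1 h2)
end
end

section
/- Let N ≥ 2 and let p, q > N be coprime integers. Define r = ∏_P r_P, the product over the distinct primes P dividing 2N, where r_P = 1 if P divides pq and r_P = P otherwise. Then gcd(rp − q, 2N) = 1 and gcd(r²p + q, 2N) = 1; in particular, a pq-admissible integer always exists. -/
/-!
For each prime `P ∣ 2N` the factor `r_P` is chosen so that exactly one of `r` and `pq` is divisible
by `P` (as `p, q` are coprime, `P` divides at most one of them). Then `P` divides exactly one of the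
summands `r^k p` and `± q`, so it cannot divide `r^k p ± q`.
-/

theorem Prime.not_dvd_mul_add_of_dvd_iff {R : Type*} [CommRing R] {P a x y : R} (hP : Prime P)
    (hxy : IsCoprime x y) (ha : P ∣ a ↔ ¬ P ∣ x * y) : ¬ P ∣ a * x + y := by
  intro h
  have hsum : P ∣ a * x ↔ P ∣ y :=
    ⟨fun hax => (dvd_add_right hax).mp h, fun hy => (dvd_add_left hy).mp h⟩
  have hnot_both : ¬ (P ∣ x ∧ P ∣ y) := fun ⟨hx, hy⟩ => hP.not_isUnit (hxy.isUnit_of_dvd' hx hy)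
  rw [hP.dvd_mul] at ha hsum
  tauto

theorem Prime.not_dvd_mul_sub_of_dvd_iff {R : Type*} [CommRing R] {P a x y : R} (hP : Prime P)
    (hxy : IsCoprime x y) (ha : P ∣ a ↔ ¬ P ∣ x * y) : ¬ P ∣ a * x - y := by
  rw [sub_eq_add_neg]
  exact hP.not_dvd_mul_add_of_dvd_iff hxy.neg_right (by rwa [mul_neg, dvd_neg])

theorem Nat.Prime.dvd_prod_primeFactors_ite_iff {n m P : ℕ} (hn : n ≠ 0) (hP : P.Prime)
    (hPn : P ∣ n) : P ∣ ∏ Q ∈ n.primeFactors, (if Q ∣ m then 1 else Q) ↔ ¬ P ∣ m := by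
  constructor
  · intro h hPm
    obtain ⟨Q, hQ, hPQ⟩ := (hP.prime.dvd_finsetProd_iff _).mp h
    by_cases hQm : Q ∣ m
    · simp only [hQm, if_true, Nat.dvd_one] at hPQ
      exact hP.ne_one hPQ
    · simp only [hQm, if_false] at hPQ
      rw [(Nat.prime_dvd_prime_iff_eq hP (Nat.prime_of_mem_primeFactors hQ)).mp hPQ] at hPm
      exact hQm hPm
  · intro hPm
    simpa [hPm] using Finset.dvd_prod_of_mem (fun Q => if Q ∣ m then 1 else Q)
      (Nat.mem_primeFactors.mpr ⟨hP, hPn, hn⟩)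

theorem Int.gcd_natCast_eq_one_of_forall_prime {a : ℤ} {n : ℕ}
    (h : ∀ P : ℕ, P.Prime → P ∣ n → ¬ (P : ℤ) ∣ a) : Int.gcd a n = 1 := by
  rw [Int.gcd_eq_natAbs, Int.natAbs_natCast]
  exact Nat.coprime_of_dvd fun P hP hPa hPn => h P hP hPn (Int.natCast_dvd.mpr hPa)

theorem statement14_general (N p q : ℕ) (hN : 2 ≤ N)
    (hco : Nat.Coprime p q)
    (r : ℕ) (hr : r = ∏ P ∈ (2 * N).primeFactors, (if P ∣ p * q then 1 else P)) :
    (Int.gcd ((r : ℤ) * p - q) (2 * N) = 1 ∧ Int.gcd ((r : ℤ) ^ 2 * p + q) (2 * N) = 1) ∧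
    ∃ s : ℤ, Int.gcd (s * p - q) (2 * N) = 1 ∧ Int.gcd (s ^ 2 * p + q) (2 * N) = 1 := by
  have hpq : IsCoprime (p : ℤ) q := Nat.isCoprime_iff_coprime.mpr hco
  have hr_dvd : ∀ P : ℕ, P.Prime → P ∣ 2 * N → ((P : ℤ) ∣ r ↔ ¬ (P : ℤ) ∣ p * q) := by
    intro P hP hPN
    rw [hr, ← Nat.cast_mul, Int.natCast_dvd_natCast, Int.natCast_dvd_natCast]
    exact hP.dvd_prod_primeFactors_ite_iff (by omega) hPN
  have hadm :
      Int.gcd ((r : ℤ) * p - q) (2 * N) = 1 ∧ Int.gcd ((r : ℤ) ^ 2 * p + q) (2 * N) = 1 := by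
    rw [show (2 * N : ℤ) = ((2 * N : ℕ) : ℤ) by push_cast; rfl]
    constructor <;> refine Int.gcd_natCast_eq_one_of_forall_prime fun P hP hPN => ?_
    · exact (Nat.prime_iff_prime_int.mp hP).not_dvd_mul_sub_of_dvd_iff hpq (hr_dvd P hP hPN)
    · have hPz : Prime (P : ℤ) := Nat.prime_iff_prime_int.mp hP
      exact hPz.not_dvd_mul_add_of_dvd_iff hpq
        ((hPz.dvd_pow_iff_dvd two_ne_zero).trans (hr_dvd P hP hPN))
  exact ⟨hadm, r, hadm⟩

theorem statement14 (N p q : ℕ) (hN : 2 ≤ N) (hp : N < p) (hq : N < q)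
    (hco : Nat.Coprime p q)
    (r : ℕ) (hr : r = ∏ P ∈ (2 * N).primeFactors, (if P ∣ p * q then 1 else P)) :
    (Int.gcd ((r : ℤ) * p - q) (2 * N) = 1 ∧ Int.gcd ((r : ℤ) ^ 2 * p + q) (2 * N) = 1) ∧
    ∃ s : ℤ, Int.gcd (s * p - q) (2 * N) = 1 ∧ Int.gcd (s ^ 2 * p + q) (2 * N) = 1 :=
  statement14_general N p q hN hco r hr
end

section
/- Let N ≥ 2 and λ ∈ ℤ^{N−1}. Then Q_N(λ) ≡ (N − t(λ))·t(λ) (mod 2N). -/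
/-
Writing `t² = Σ (iλ_i)² + 2 Σ_{i<j} (iλ_i)(jλ_j)` and using `i(N−i) + i² = Ni` on the diagonal and
`i(N−j) + ij = Ni` off it gives `Q_N(λ) − (N − t)t = N·(Σ i·λ_i(λ_i − 1) + 2 Σ_{i<j} i·λ_iλ_j)`,
and each `λ_i(λ_i − 1)` is even.
-/

/-- Triality `t(λ) = Σ_{j=1}^{N−1} j·λ_j` (0-indexed: `j ↦ j+1`). -/
def triN (N : ℕ) (f : Fin (N - 1) → ℤ) : ℤ := ∑ j : Fin (N - 1), ((j.val : ℤ) + 1) * f j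

/-- `B_N(λ,μ) = Σ i(N−i)λ_iμ_i + Σ_{i<j} i(N−j)(λ_iμ_j+λ_jμ_i)`, so `Q_N(λ) = B_N(λ,λ)`. -/
def BN (N : ℕ) (f g : Fin (N - 1) → ℤ) : ℤ :=
  (∑ i : Fin (N - 1), ((i.val : ℤ) + 1) * ((N : ℤ) - ((i.val : ℤ) + 1)) * f i * g i) +
    ∑ i : Fin (N - 1), ∑ j : Fin (N - 1), if i.val < j.val then
      ((i.val : ℤ) + 1) * ((N : ℤ) - ((j.val : ℤ) + 1)) * (f i * g j + f j * g i) else 0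

open Finset

theorem Fintype.sum_mul_sum_eq_sum_mul_self_add_two_mul_sum_lt {ι R : Type*} [Fintype ι]
    [LinearOrder ι] [CommSemiring R] (x : ι → R) :
    (∑ i, x i) * (∑ j, x j) =
      ∑ i, x i * x i + 2 * ∑ i, ∑ j, if i < j then x i * x j else 0 := by
  have hsplit : ∀ i j, x i * x j = (if i = j then x i * x j else 0) +
      (if i < j then x i * x j else 0) + (if j < i then x j * x i else 0) := by
    intro i j
    rcases lt_trichotomy i j with h | rfl | h
    · simp [h, h.ne, h.not_gt]
    · simp
    · simp [h, h.ne', h.not_gt, mul_comm]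
  rw [sum_mul_sum, Finset.sum_congr rfl fun i _ => Finset.sum_congr rfl fun j _ => hsplit i j]
  simp only [sum_add_distrib, sum_ite_eq]
  rw [sum_comm (f := fun i j => if j < i then x j * x i else 0)]
  ring

theorem BN_self_sub_eq (N : ℕ) (f : Fin (N - 1) → ℤ) :
    BN N f f - ((N : ℤ) - triN N f) * triN N f =
      N * ((∑ i : Fin (N - 1), ((i.val : ℤ) + 1) * (f i * (f i - 1))) +
        2 * ∑ i : Fin (N - 1), ∑ j : Fin (N - 1),
          if i < j then ((i.val : ℤ) + 1) * f i * f j else 0) := by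
  have hsq := Fintype.sum_mul_sum_eq_sum_mul_self_add_two_mul_sum_lt fun i : Fin (N - 1) =>
    ((i.val : ℤ) + 1) * f i
  rw [show BN N f f - ((N : ℤ) - triN N f) * triN N f =
    BN N f f - N * triN N f + triN N f * triN N f by ring, triN, hsq, BN]
  simp only [Fin.lt_def, mul_sum, mul_add, ← sum_sub_distrib, ← sum_add_distrib]
  refine sum_congr rfl fun i _ => ?_
  rw [add_sub_right_comm, add_add_add_comm, ← sum_add_distrib]
  congr 1
  · ring
  · refine sum_congr rfl fun j _ => ?_
    split_ifs <;> ring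

theorem statement15_general (N : ℕ) (f : Fin (N - 1) → ℤ) :
    (2 * (N : ℤ)) ∣ (BN N f f - ((N : ℤ) - triN N f) * triN N f) := by
  rw [BN_self_sub_eq, mul_comm 2]
  refine mul_dvd_mul_left _ (dvd_add (dvd_sum fun i _ => ?_) (dvd_mul_right 2 _))
  exact dvd_mul_of_dvd_right (Int.even_mul_pred_self (f i)).two_dvd _

theorem statement15 (N : ℕ) (hN : 2 ≤ N) (f : Fin (N - 1) → ℤ) :
    (2 * (N : ℤ)) ∣ (BN N f f - ((N : ℤ) - triN N f) * triN N f) :=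
  statement15_general N f
end

section
/- For every real n > 0, the function c(x) = x·cot(πx/n) is strictly decreasing and strictly concave on the open interval (0, n). -/
open Real Set

theorem statement17 (n : ℝ) (hn : 0 < n) :
    StrictAntiOn (fun x : ℝ => x * Real.cot (Real.pi * x / n)) (Set.Ioo 0 n) ∧
    StrictConcaveOn ℝ (Set.Ioo 0 n) (fun x : ℝ => x * Real.cot (Real.pi * x / n)) := by
  have hπ := Real.pi_pos
  set u : ℝ → ℝ := fun x => Real.pi * x / n with hu_def
  set f : ℝ → ℝ := fun x : ℝ => x * Real.cot (Real.pi * x / n) with hf_def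
  set F' : ℝ → ℝ := fun x =>
    (Real.sin (u x) * Real.cos (u x) - u x) / (Real.sin (u x)) ^ 2 with hF'_def
  set F'' : ℝ → ℝ := fun x =>
    2 * (Real.pi / n) * (u x * Real.cos (u x) - Real.sin (u x)) / (Real.sin (u x)) ^ 3
    with hF''_def
  -- basic facts
  have hmem : ∀ x ∈ Set.Ioo (0:ℝ) n, 0 < u x ∧ u x < Real.pi := by
    intro x hx
    constructor
    · exact div_pos (mul_pos hπ hx.1) hn
    · rw [div_lt_iff₀ hn]
      calc Real.pi * x < Real.pi * n := by nlinarith [hx.2]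
        _ = Real.pi * n := rfl
  have hsinpos : ∀ x ∈ Set.Ioo (0:ℝ) n, 0 < Real.sin (u x) := by
    intro x hx
    exact Real.sin_pos_of_pos_of_lt_pi (hmem x hx).1 (hmem x hx).2
  have hu : ∀ x : ℝ, HasDerivAt u (Real.pi / n) x := by
    intro x
    simpa using ((hasDerivAt_id x).const_mul Real.pi).div_const n
  have hsin : ∀ x : ℝ, HasDerivAt (fun y => Real.sin (u y))
      (Real.cos (u x) * (Real.pi / n)) x := by
    intro x
    exact (Real.hasDerivAt_sin (u x)).comp x (hu x)
  have hcos : ∀ x : ℝ, HasDerivAt (fun y => Real.cos (u y))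
      (-Real.sin (u x) * (Real.pi / n)) x := by
    intro x
    exact (Real.hasDerivAt_cos (u x)).comp x (hu x)
  have hfe : f = fun x => x * (Real.cos (u x) / Real.sin (u x)) := by
    funext x
    simp [hf_def, Real.cot_eq_cos_div_sin, hu_def]
  -- first derivative
  have hderiv : ∀ x ∈ Set.Ioo (0:ℝ) n, HasDerivAt f (F' x) x := by
    intro x hx
    have hs := (hsinpos x hx).ne'
    have h1 : HasDerivAt (fun y => y * (Real.cos (u y) / Real.sin (u y)))
        (1 * (Real.cos (u x) / Real.sin (u x)) +
          x * ((-Real.sin (u x) * (Real.pi / n) * Real.sin (u x) -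
            Real.cos (u x) * (Real.cos (u x) * (Real.pi / n))) / (Real.sin (u x)) ^ 2)) x :=
      (hasDerivAt_id x).mul ((hcos x).div (hsin x) hs)
    rw [hfe]
    convert h1 using 1
    have hpyth := Real.sin_sq_add_cos_sq (u x)
    have hkey : -Real.sin (u x) * (Real.pi / n) * Real.sin (u x) -
        Real.cos (u x) * (Real.cos (u x) * (Real.pi / n)) = -(Real.pi / n) := by
      linear_combination (-(Real.pi / n)) * hpyth
    rw [hkey, hF'_def]
    simp only [hu_def]
    field_simp
    ring
  -- second derivative
  have hderiv2 : ∀ x ∈ Set.Ioo (0:ℝ) n, HasDerivAt F' (F'' x) x := by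
    intro x hx
    have hs := (hsinpos x hx).ne'
    have hN : HasDerivAt (fun y => Real.sin (u y) * Real.cos (u y) - u y)
        (Real.cos (u x) * (Real.pi / n) * Real.cos (u x) +
          Real.sin (u x) * (-Real.sin (u x) * (Real.pi / n)) - Real.pi / n) x :=
      ((hsin x).mul (hcos x)).sub (hu x)
    have hD : HasDerivAt (fun y => (Real.sin (u y)) ^ 2)
        (2 * (Real.sin (u x)) ^ 1 * (Real.cos (u x) * (Real.pi / n))) x :=
      (hsin x).pow 2
    have hq := hN.div hD (pow_ne_zero 2 hs)
    convert hq using 1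
    case e'_4 => rfl
    case e'_5 => rfl
    case e'_8 => rfl
    have hpyth := Real.sin_sq_add_cos_sq (u x)
    have hkey : Real.cos (u x) * (Real.pi / n) * Real.cos (u x) +
        Real.sin (u x) * (-Real.sin (u x) * (Real.pi / n)) - Real.pi / n =
        -2 * (Real.pi / n) * (Real.sin (u x)) ^ 2 := by
      linear_combination (Real.pi / n) * hpyth
    rw [hkey, hF''_def]
    field_simp
    linear_combination (Real.sin (u x)) * hpyth
  -- sign of F'
  have hF'neg : ∀ x ∈ Set.Ioo (0:ℝ) n, F' x < 0 := by
    intro x hx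
    have hs := hsinpos x hx
    have h0 := (hmem x hx).1
    have hnum : Real.sin (u x) * Real.cos (u x) - u x < 0 := by
      have h2 : Real.sin (2 * u x) < 2 * u x := Real.sin_lt (by linarith)
      rw [Real.sin_two_mul] at h2
      linarith
    exact div_neg_of_neg_of_pos hnum (by positivity)
  -- sign of F''
  have hF''neg : ∀ x ∈ Set.Ioo (0:ℝ) n, F'' x < 0 := by
    intro x hx
    have hs := hsinpos x hx
    have h0 := (hmem x hx).1
    have h1 := (hmem x hx).2
    have hnum : u x * Real.cos (u x) - Real.sin (u x) < 0 := by
      rcases lt_or_ge (u x) (Real.pi / 2) with h | h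
      · have hc : 0 < Real.cos (u x) :=
          Real.cos_pos_of_mem_Ioo ⟨by linarith, h⟩
        have ht : u x < Real.tan (u x) := Real.lt_tan h0 h
        have : u x * Real.cos (u x) < Real.tan (u x) * Real.cos (u x) :=
          mul_lt_mul_of_pos_right ht hc
        rw [Real.tan_eq_sin_div_cos] at this
        rw [div_mul_cancel₀ _ hc.ne'] at this
        linarith
      · have hc : Real.cos (u x) ≤ 0 :=
          Real.cos_nonpos_of_pi_div_two_le_of_le h (by linarith)
        nlinarith
    have : 2 * (Real.pi / n) * (u x * Real.cos (u x) - Real.sin (u x)) < 0 := by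
      have h2 : 0 < 2 * (Real.pi / n) := by positivity
      exact mul_neg_of_pos_of_neg h2 hnum
    exact div_neg_of_neg_of_pos this (by positivity)
  have hcont : ContinuousOn f (Set.Ioo 0 n) := fun x hx =>
    ((hderiv x hx).continuousAt).continuousWithinAt
  constructor
  · apply strictAntiOn_of_deriv_neg (convex_Ioo 0 n) hcont
    intro x hx
    rw [interior_Ioo] at hx
    rw [(hderiv x hx).deriv]
    exact hF'neg x hx
  · apply strictConcaveOn_of_deriv2_neg (convex_Ioo 0 n) hcont
    intro x hx
    rw [interior_Ioo] at hx
    have hev : deriv f =ᶠ[nhds x] F' := by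
      filter_upwards [Ioo_mem_nhds hx.1 hx.2] with y hy
      exact (hderiv y hy).deriv
    have : deriv (deriv f) x = deriv F' x := hev.deriv_eq
    simp only [Function.iterate_succ, Function.iterate_zero, Function.comp_apply, id_eq]
    rw [this, (hderiv2 x hx).deriv]
    exact hF''neg x hx
end

section
/- Let n ≥ 6 be an integer divisible by 3. Call a pair (a,b) of integers n-admissible if 1 ≤ a ≤ b, a + 2b ≤ n, and a ≡ b (mod 3). If (a,b) and (a′,b′) are n-admissible with a ≤ a′, b ≤ b′ and (a,b) ≠ (a′,b′), then sin(πa/n)·sin(πb/n)·sin(π(a+b)/n) < sin(πa′/n)·sin(πb′/n)·sin(π(a′+b′)/n); equivalently, D^(n)((a,b)) < D^(n)((a′,b′)). -/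
noncomputable section

/-- `(a,b)` is `n`-admissible: `1 ≤ a ≤ b`, `a + 2b ≤ n`, `a ≡ b (mod 3)`. -/
def Adm (n : ℕ) (a b : ℤ) : Prop := 1 ≤ a ∧ a ≤ b ∧ a + 2 * b ≤ (n : ℤ) ∧ (3 : ℤ) ∣ (a - b)

/-!
Since `sin y * sin (x + y) = (cos x - cos (x + 2 * y)) / 2` and `cos` decreases on `[0, π]`,
the product `sin x * sin y * sin (x + y)` increases in `y` as long as `x + 2 * y ≤ π`, and by
symmetry in `x` as long as `2 * x + y ≤ π`. For an admissible `(a', b')` we have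
`2 * a' + b' ≤ a' + 2 * b' ≤ n`, so one can pass from `(a, b)` to `(a, b')` and then to
`(a', b')`.
-/

open Real

def sinTriple (x y : ℝ) : ℝ := sin x * sin y * sin (x + y)

lemma sinTriple_comm (x y : ℝ) : sinTriple x y = sinTriple y x := by
  rw [sinTriple, sinTriple, add_comm y]; ring

lemma sin_mul_sin_add (x y : ℝ) : sin y * sin (x + y) = (cos x - cos (x + 2 * y)) / 2 := by
  have h := cos_sub_cos x (x + 2 * y)
  rw [show (x + (x + 2 * y)) / 2 = x + y by ring, show (x - (x + 2 * y)) / 2 = -y by ring,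
    sin_neg] at h
  linarith

lemma sin_mul_sin_add_lt {x y y' : ℝ} (h0 : 0 ≤ x + 2 * y) (hy : y < y')
    (hπ : x + 2 * y' ≤ π) :
    sin y * sin (x + y) < sin y' * sin (x + y') := by
  rw [sin_mul_sin_add, sin_mul_sin_add]
  have : cos (x + 2 * y') < cos (x + 2 * y) :=
    cos_lt_cos_of_nonneg_of_le_pi h0 hπ (by linarith)
  linarith

lemma sinTriple_lt_sinTriple_right {x y y' : ℝ} (hx : 0 < x) (hy : 0 ≤ y) (hyy : y < y')
    (hπ : x + 2 * y' ≤ π) : sinTriple x y < sinTriple x y' := by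
  have hsin : 0 < sin x := sin_pos_of_pos_of_lt_pi hx (by linarith)
  simp only [sinTriple, mul_assoc]
  exact mul_lt_mul_of_pos_left (sin_mul_sin_add_lt (by linarith) hyy hπ) hsin

lemma sinTriple_lt_sinTriple_left {x x' y : ℝ} (hy : 0 < y) (hx : 0 ≤ x) (hxx : x < x')
    (hπ : 2 * x' + y ≤ π) : sinTriple x y < sinTriple x' y := by
  rw [sinTriple_comm x, sinTriple_comm x']
  exact sinTriple_lt_sinTriple_right hy hx hxx (by linarith)

theorem sinTriple_lt_sinTriple {x y x' y' : ℝ} (hx : 0 < x) (hy : 0 < y) (hxx : x ≤ x')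
    (hyy : y ≤ y') (hx'y' : x' ≤ y') (hπ : x' + 2 * y' ≤ π) (hlt : x < x' ∨ y < y') :
    sinTriple x y < sinTriple x' y' := by
  have right (hyy : y < y') : sinTriple x y < sinTriple x y' :=
    sinTriple_lt_sinTriple_right hx hy.le hyy (by linarith)
  have left (hxx : x < x') : sinTriple x y' < sinTriple x' y' :=
    sinTriple_lt_sinTriple_left (by linarith) hx.le hxx (by linarith)
  rcases hyy.lt_or_eq with hyy | rfl <;> rcases hxx.lt_or_eq with hxx | rfl
  · exact (right hyy).trans (left hxx)
  · exact right hyy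
  · exact left hxx
  · simp at hlt

lemma sinTriple_pi_mul_div (a b N : ℝ) :
    sinTriple (π * a / N) (π * b / N) =
      sin (π * a / N) * sin (π * b / N) * sin (π * (a + b) / N) := by
  rw [sinTriple, mul_add, add_div]

lemma qdim_denom_pos {n : ℕ} (hn : 3 ≤ n) : 0 < sin (π / n) ^ 2 * sin (2 * π / n) := by
  have hN : (3 : ℝ) ≤ n := by exact_mod_cast hn
  have hN0 : (0 : ℝ) < n := by linarith
  have h1 : 0 < sin (π / n) :=
    sin_pos_of_pos_of_lt_pi (by positivity) (by rw [div_lt_iff₀ hN0]; nlinarith [pi_pos])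
  have h2 : 0 < sin (2 * π / n) :=
    sin_pos_of_pos_of_lt_pi (by positivity) (by rw [div_lt_iff₀ hN0]; nlinarith [pi_pos])
  positivity

theorem statement19_general (n : ℕ) (hn : 6 ≤ n)
    (a b a' b' : ℤ) (h : Adm n a b) (h' : Adm n a' b')
    (ha : a ≤ a') (hb : b ≤ b') (hne : (a, b) ≠ (a', b')) :
    Real.sin (Real.pi * (a : ℝ) / n) * Real.sin (Real.pi * (b : ℝ) / n) *
        Real.sin (Real.pi * ((a : ℝ) + (b : ℝ)) / n) <
      Real.sin (Real.pi * (a' : ℝ) / n) * Real.sin (Real.pi * (b' : ℝ) / n) *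
        Real.sin (Real.pi * ((a' : ℝ) + (b' : ℝ)) / n) ∧
    qdim n (a, b) < qdim n (a', b') := by
  obtain ⟨ha1, hab, -, -⟩ := h
  obtain ⟨-, hab', hsum', -⟩ := h'
  have hN : (0 : ℝ) < n := by exact_mod_cast (by omega : 0 < n)
  have hlt : a < a' ∨ b < b' := by
    by_contra! hc
    exact hne (Prod.ext (by omega) (by omega))
  have key : sinTriple (π * a / n) (π * b / n) < sinTriple (π * a' / n) (π * b' / n) := by
    have hsum : (a' : ℝ) + 2 * b' ≤ n := by exact_mod_cast hsum'
    have ha0 : (0 : ℝ) < a := by exact_mod_cast ha1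
    have hb0 : (0 : ℝ) < b := by exact_mod_cast (by omega : 0 < b)
    refine sinTriple_lt_sinTriple (by positivity) (by positivity) (by gcongr) (by gcongr)
      (by gcongr) ?_ ?_
    · rw [← mul_div_assoc, ← add_div, div_le_iff₀ hN]; nlinarith [pi_pos]
    · refine hlt.imp (fun h ↦ ?_) (fun h ↦ ?_) <;> gcongr
  rw [sinTriple_pi_mul_div, sinTriple_pi_mul_div] at key
  exact ⟨key, div_lt_div_of_pos_right key (qdim_denom_pos (by omega))⟩

theorem statement19 (n : ℕ) (hn : 6 ≤ n) (h3 : 3 ∣ n)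
    (a b a' b' : ℤ) (h : Adm n a b) (h' : Adm n a' b')
    (ha : a ≤ a') (hb : b ≤ b') (hne : (a, b) ≠ (a', b')) :
    Real.sin (Real.pi * (a : ℝ) / n) * Real.sin (Real.pi * (b : ℝ) / n) *
        Real.sin (Real.pi * ((a : ℝ) + (b : ℝ)) / n) <
      Real.sin (Real.pi * (a' : ℝ) / n) * Real.sin (Real.pi * (b' : ℝ) / n) *
        Real.sin (Real.pi * ((a' : ℝ) + (b' : ℝ)) / n) ∧
    qdim n (a, b) < qdim n (a', b') :=
  statement19_general n hn a b a' b' h h' ha hb hne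
end
end
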